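/- Let A be the arrangement of 10 hyperplanes in ℝ^4 with defining forms α_1 = x_3, α_2 = x_3 − x_4, α_3 = x_2, α_4 = x_2 + x_3 − 2x_4, α_5 = x_1, α_6 = x_1 + x_3 − 2x_4, α_7 = x_2 + 2x_3 − 2x_4, α_8 = x_1 + 2x_3 − 2x_4, α_9 = x_1 + x_2 + x_3 − 2x_4, α_10 = x_4, and let φ : ℝ^10 → (ℝ^4)* send the i-th standard basis vector to α_i. Then ker φ has dimension 6 and is spanned by the seven vectors corresponding to the relations α_1 − α_2 − α_10 = 0, α_1 + α_4 − α_7 = 0, α_1 + α_6 − α_8 = 0, 2α_2 + α_3 − α_7 = 0, 2α_2 + α_5 − α_8 = 0, α_3 + α_6 − α_9 = 0, α_4 + α_5 − α_9 = 0; in particular, every relation is a linear combination of relations supported on exactly three forms, so A is formal. -/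

import Mathlib

open Module LinearMap Submodule

/-- The linear map `E(A) = ⊕_{H ∈ A} K·e_H → V*` sending `e_H` to the defining form `α_H`. -/
noncomputable def phiA {K V ι : Type*} [Field K] [AddCommGroup V] [Module K V] [Fintype ι]
    (α : ι → Module.Dual K V) : (ι → K) →ₗ[K] Module.Dual K V :=
  Fintype.linearCombination K α

/-- `F_2(A)`: the subspace of the relation space `F(A)` spanned by the relations
supported on exactly three hyperplanes. -/
noncomputable def F2A {K V ι : Type*} [Field K] [AddCommGroup V] [Module K V] [Fintype ι]
    (α : ι → Module.Dual K V) : Submodule K (ι → K) :=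
  Submodule.span K {c | c ∈ LinearMap.ker (phiA α) ∧ {i | c i ≠ 0}.ncard = 3}
/-- The coordinate form `x_{i+1} ∈ (ℝ^4)*`. -/
noncomputable def prBT (i : Fin 4) : Module.Dual ℝ (Fin 4 → ℝ) :=
  LinearMap.proj (R := ℝ) (φ := fun _ : Fin 4 => ℝ) i

/-- The ten defining forms of the arrangement of Brandt–Terao's Example 5.1:
`α₁ = x₃`, `α₂ = x₃ - x₄`, `α₃ = x₂`, `α₄ = x₂ + x₃ - 2x₄`, `α₅ = x₁`,
`α₆ = x₁ + x₃ - 2x₄`, `α₇ = x₂ + 2x₃ - 2x₄`, `α₈ = x₁ + 2x₃ - 2x₄`,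
`α₉ = x₁ + x₂ + x₃ - 2x₄`, `α₁₀ = x₄`. -/
noncomputable def alphaBT : Fin 10 → Module.Dual ℝ (Fin 4 → ℝ) :=
  ![prBT 2,
    prBT 2 - prBT 3,
    prBT 1,
    prBT 1 + prBT 2 - 2 • prBT 3,
    prBT 0,
    prBT 0 + prBT 2 - 2 • prBT 3,
    prBT 1 + 2 • prBT 2 - 2 • prBT 3,
    prBT 0 + 2 • prBT 2 - 2 • prBT 3,
    prBT 0 + prBT 1 + prBT 2 - 2 • prBT 3,
    prBT 3]

/-- The seven relations of length three among the forms `alphaBT`: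
`α₁ - α₂ - α₁₀`, `α₁ + α₄ - α₇`, `α₁ + α₆ - α₈`, `2α₂ + α₃ - α₇`, `2α₂ + α₅ - α₈`,
`α₃ + α₆ - α₉`, `α₄ + α₅ - α₉`. -/
noncomputable def relBT : Fin 7 → (Fin 10 → ℝ) :=
  ![![1, -1, 0, 0, 0, 0, 0, 0, 0, -1],
    ![1, 0, 0, 1, 0, 0, -1, 0, 0, 0],
    ![1, 0, 0, 0, 0, 1, 0, -1, 0, 0],
    ![0, 2, 1, 0, 0, 0, -1, 0, 0, 0],
    ![0, 2, 0, 0, 1, 0, 0, -1, 0, 0],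
    ![0, 0, 1, 0, 0, 1, 0, 0, -1, 0],
    ![0, 0, 0, 1, 1, 0, 0, 0, -1, 0]]

/-!
A vector `c` lies in the kernel of `φ` iff it satisfies four linear equations, one for each
coordinate of `ℝ⁴`; they can be solved for `c 0, c 1, c 6, c 7` (indices start at `0`, so `c i`
is the coefficient of `α_{i+1}`), and the relations of length three express every solution in
terms of the six remaining coordinates. Since `α₅, α₃, α₁, α₁₀` are the coordinate forms, `φ` is
onto, so by rank–nullity the kernel has dimension `10 - 4 = 6`.
-/

section Arrangement

variable {K V ι : Type*} [Field K] [AddCommGroup V] [Module K V] [Fintype ι]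

theorem F2A_le_ker (α : ι → Module.Dual K V) : F2A α ≤ LinearMap.ker (phiA α) :=
  Submodule.span_le.2 fun _ hc => hc.1

theorem ker_phiA_eq_F2A_of_eq_span {κ : Type*} {α : ι → Module.Dual K V} {r : κ → ι → K}
    (hspan : LinearMap.ker (phiA α) = Submodule.span K (Set.range r))
    (hsupp : ∀ k, {i | r k i ≠ 0}.ncard = 3) :
    LinearMap.ker (phiA α) = F2A α := by
  refine le_antisymm ?_ (F2A_le_ker α)
  rw [hspan, Submodule.span_le]
  rintro _ ⟨k, rfl⟩
  exact Submodule.subset_span ⟨hspan ▸ Submodule.subset_span ⟨k, rfl⟩, hsupp k⟩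

theorem finrank_ker_phiA [FiniteDimensional K V] {α : ι → Module.Dual K V}
    (hα : Submodule.span K (Set.range α) = ⊤) :
    Module.finrank K (LinearMap.ker (phiA α)) = Fintype.card ι - Module.finrank K V := by
  have h := LinearMap.finrank_range_add_finrank_ker (phiA α)
  rw [phiA, Fintype.range_linearCombination, hα, finrank_top, Subspace.dual_finrank_eq,
    Module.finrank_fintype_fun_eq_card] at h
  rw [phiA]; omega

theorem mem_ker_phiA_iff {n : Type*} [Fintype n] [DecidableEq n]
    (α : ι → Module.Dual K (n → K)) (c : ι → K) :
    c ∈ LinearMap.ker (phiA α) ↔ ∀ i, ∑ j, c j * α j (Pi.single i 1) = 0 := by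
  have hc : ∀ i, phiA α c (Pi.single i 1) = ∑ j, c j * α j (Pi.single i 1) := fun i => by
    simp [phiA, Fintype.linearCombination_apply]
  simp_rw [LinearMap.mem_ker, ← hc]
  exact ⟨fun h i => by rw [h, LinearMap.zero_apply],
    fun h => (Pi.basisFun K n).ext fun i => by simpa using h i⟩

end Arrangement

theorem mem_ker_phiA_alphaBT_iff (c : Fin 10 → ℝ) :
    c ∈ LinearMap.ker (phiA alphaBT) ↔
      c 4 + c 5 + c 7 + c 8 = 0 ∧
      c 2 + c 3 + c 6 + c 8 = 0 ∧
      c 0 + c 1 + c 3 + c 5 + 2 * c 6 + 2 * c 7 + c 8 = 0 ∧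
      c 9 = c 1 + 2 * c 3 + 2 * c 5 + 2 * c 6 + 2 * c 7 + 2 * c 8 := by
  rw [mem_ker_phiA_iff, Fin.forall_fin_succ, Fin.forall_fin_succ, Fin.forall_fin_succ,
    Fin.forall_fin_one]
  simp only [alphaBT, prBT, Fin.isValue, Fin.sum_univ_succ, Matrix.cons_val_zero, coe_proj,
    Function.eval, ne_eq, Fin.reduceEq, not_false_eq_true, Pi.single_eq_of_ne, mul_zero,
    Matrix.cons_val_succ, Fin.succ_zero_eq_one, LinearMap.sub_apply, sub_self, Fin.succ_one_eq_two,
    one_ne_zero, Fin.reduceSucc, LinearMap.add_apply, add_zero, LinearMap.smul_apply,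
    Pi.single_eq_same, mul_one, sub_zero, Finset.univ_unique, Fin.default_eq_zero,
    Matrix.cons_val_fin_one, Finset.sum_const_zero, zero_add, zero_ne_one, nsmul_eq_mul,
    Nat.cast_ofNat, zero_sub, mul_neg, Finset.sum_singleton]
  constructor <;> rintro ⟨h₁, h₂, h₃, h₄⟩ <;>
    exact ⟨by linarith, by linarith, by linarith, by linarith⟩

theorem span_range_alphaBT : Submodule.span ℝ (Set.range alphaBT) = ⊤ := by
  have hpr : ⇑(Pi.basisFun ℝ (Fin 4)).dualBasis = prBT := by
    ext i v
    simp [prBT]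
  have hsub : Set.range prBT ⊆ Set.range alphaBT := by
    rintro _ ⟨i, rfl⟩
    fin_cases i
    exacts [⟨4, rfl⟩, ⟨2, rfl⟩, ⟨0, rfl⟩, ⟨9, rfl⟩]
  rw [eq_top_iff, ← (Pi.basisFun ℝ (Fin 4)).dualBasis.span_eq, hpr]
  exact Submodule.span_mono hsub

theorem relBT_mem_ker (k : Fin 7) : relBT k ∈ LinearMap.ker (phiA alphaBT) := by
  rw [mem_ker_phiA_alphaBT_iff]
  fin_cases k <;> simp [relBT, one_add_one_eq_two]

theorem ker_phiA_alphaBT_le_span :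
    LinearMap.ker (phiA alphaBT) ≤ Submodule.span ℝ (Set.range relBT) := by
  intro c hc
  obtain ⟨h₁, h₂, h₃, h₄⟩ := (mem_ker_phiA_alphaBT_iff c).1 hc
  rw [mem_span_range_iff_exists_fun]
  -- Match the free coordinates `c 9, c 3, c 5, c 2, c 4, c 8` of the kernel: `relBT 5` is the
  -- only relation involving more than one of them (`c 2, c 5, c 8`), and `relBT 6` is not needed.
  refine ⟨![-c 9, c 3, c 5 + c 8, c 2 + c 8, c 4, -c 8, 0], ?_⟩
  ext j
  fin_cases j <;> simp [Fin.sum_univ_succ, relBT] <;> linarith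

theorem ker_phiA_alphaBT : LinearMap.ker (phiA alphaBT) = Submodule.span ℝ (Set.range relBT) :=
  le_antisymm ker_phiA_alphaBT_le_span <|
    Submodule.span_le.2 <| Set.range_subset_iff.2 relBT_mem_ker

theorem ncard_support_relBT (k : Fin 7) : {i | relBT k i ≠ 0}.ncard = 3 := by
  rw [Set.ncard_eq_three]
  fin_cases k <;> [use 0, 1, 9; use 0, 3, 6; use 0, 5, 7; use 1, 2, 6; use 1, 4, 7; use 2, 5, 8;
    use 3, 4, 8] <;> refine ⟨by decide, by decide, by decide, ?_⟩ <;> ext j <;> fin_cases j <;>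
    simp [relBT]

/-- For the arrangement of ten hyperplanes in `ℝ⁴` with defining forms
`alphaBT`, the kernel of `φ : ℝ¹⁰ → (ℝ⁴)*` has dimension `6` and is spanned by the seven
vectors `relBT` corresponding to relations supported on exactly three forms; in
particular `F(A) = F₂(A)`, i.e. `A` is formal. -/
theorem brandt_terao_example_formal :
    Module.finrank ℝ ↥(LinearMap.ker (phiA alphaBT)) = 6 ∧
    LinearMap.ker (phiA alphaBT) = Submodule.span ℝ (Set.range relBT) ∧
    LinearMap.ker (phiA alphaBT) = F2A alphaBT := by
  refine ⟨?_, ker_phiA_alphaBT, ker_phiA_eq_F2A_of_eq_span ker_phiA_alphaBT ncard_support_relBT⟩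
  rw [finrank_ker_phiA span_range_alphaBT]
  simp
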